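/- arXiv:1208.1469 — 2 statements merged into one kernel-verified Lean document; each statement's English description precedes it below -/
import Mathlib

section
/- Boundedness of second difference quotients in discrete L²: let T > 0. There exists a constant C > 0 depending only on T such that for every s with 0 < s ≤ T and every function f : ℝ → ℝ of class C² on [0, T], setting K = ⌊T/s⌋, t^k = k·s and t^{k+1/2} = (k + 1/2)·s, both (s·Σ_{k=0}^{K−1} (4(f(t^{k+1}) − 2f(t^{k+1/2}) + f(t^k))/s²)²)^{1/2} ≤ C·(∫₀^T [f(t)² + f'(t)² + f''(t)²] dt)^{1/2} and (s·Σ_{k=1}^{K−1} ((f(t^{k+1}) − 2f(t^k) + f(t^{k−1}))/s²)²)^{1/2} ≤ C·(∫₀^T [f(t)² + f'(t)² + f''(t)²] dt)^{1/2} hold. -/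
/-!
Writing `f (a + 2h) - 2 f (a + h) + f a = ∫_a^{a+h} (f' (u + h) - f' u) du` bounds the second
difference by `h ∫_a^{a+2h} |f''|`, so by Cauchy–Schwarz its square is at most
`2 h³ ∫_a^{a+2h} f''²`. After division by `s⁴`, each term of either discrete norm is controlled by
`∫ f''²` over one or two cells of the grid, and every cell is used at most twice, so both norms are
at most `2 (∫₀ᵀ f''²)^{1/2}`.
-/

open Finset Set MeasureTheory intervalIntegral

theorem sq_intervalIntegral_le_mul_integral_sq {g : ℝ → ℝ} {a b : ℝ} (hab : a ≤ b)
    (hg : IntervalIntegrable g volume a b)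
    (hg2 : IntervalIntegrable (fun x => g x ^ 2) volume a b) :
    (∫ x in a..b, g x) ^ 2 ≤ (b - a) * ∫ x in a..b, g x ^ 2 := by
  rcases hab.eq_or_lt with rfl | hlt
  · simp
  have hjensen := (even_two.convexOn_pow (𝕜 := ℝ)).map_set_average_le
    (continuous_pow 2).continuousOn isClosed_univ (μ := volume) (t := Ioc a b)
    (by simp [hlt]) (by simp) (by simp) hg.1 hg2.1
  simp only [setAverage_eq, Real.volume_real_Ioc_of_le hab, smul_eq_mul,
    ← integral_of_le hab] at hjensen
  rw [mul_pow, inv_pow, ← div_eq_inv_mul, ← div_eq_inv_mul,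
    div_le_div_iff₀ (by positivity) (sub_pos.mpr hlt)] at hjensen
  nlinarith

theorem integral_eq_sub_of_hasDerivAt_of_Icc_subset {g g' : ℝ → ℝ} {a b u v : ℝ}
    (hg : ContinuousOn g (Icc a b)) (hg' : ContinuousOn g' (Icc a b))
    (hderiv : ∀ x ∈ Ioo a b, HasDerivAt g (g' x) x) (hau : a ≤ u) (huv : u ≤ v) (hvb : v ≤ b) :
    ∫ x in u..v, g' x = g v - g u :=
  integral_eq_sub_of_hasDerivAt_of_le huv (hg.mono (Icc_subset_Icc hau hvb))
    (fun x hx => hderiv x (Ioo_subset_Ioo hau hvb hx))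
    ((hg'.mono (Icc_subset_Icc hau hvb)).intervalIntegrable_of_Icc huv)

section SecondDifference

variable {f f' f'' : ℝ → ℝ} {a h : ℝ}

theorem abs_second_difference_le_mul_integral_abs (hh : 0 ≤ h)
    (hf : ContinuousOn f (Icc a (a + 2 * h))) (hf' : ContinuousOn f' (Icc a (a + 2 * h)))
    (hf'' : ContinuousOn f'' (Icc a (a + 2 * h)))
    (hderiv : ∀ x ∈ Ioo a (a + 2 * h), HasDerivAt f (f' x) x)
    (hderiv' : ∀ x ∈ Ioo a (a + 2 * h), HasDerivAt f' (f'' x) x) :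
    |f (a + 2 * h) - 2 * f (a + h) + f a| ≤ h * ∫ x in a..a + 2 * h, |f'' x| := by
  have hf'_int : ∀ u v, a ≤ u → u ≤ v → v ≤ a + 2 * h → IntervalIntegrable f' volume u v :=
    fun u v hau huv hvb => (hf'.mono (Icc_subset_Icc hau hvb)).intervalIntegrable_of_Icc huv
  have hdiff : f (a + 2 * h) - 2 * f (a + h) + f a = ∫ u in a..a + h, (f' (u + h) - f' u) := by
    rw [intervalIntegral.integral_sub, intervalIntegral.integral_comp_add_right f',
      show a + h + h = a + 2 * h by ring,
      integral_eq_sub_of_hasDerivAt_of_Icc_subset hf hf' hderiv (u := a + h) (by linarith)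
        (by linarith) le_rfl,
      integral_eq_sub_of_hasDerivAt_of_Icc_subset hf hf' hderiv le_rfl (by linarith) (by linarith)]
    · ring
    · convert (hf'_int (a + h) (a + 2 * h) (by linarith) (by linarith) le_rfl).comp_add_right h
        using 1 <;> ring
    · exact hf'_int a (a + h) le_rfl (by linarith) (by linarith)
  have hstep : ∀ u ∈ uIoc a (a + h), ‖f' (u + h) - f' u‖ ≤ ∫ x in a..a + 2 * h, |f'' x| := by
    intro u hu
    rw [uIoc_of_le (by linarith)] at hu
    rw [← integral_eq_sub_of_hasDerivAt_of_Icc_subset hf' hf'' hderiv' hu.1.le (by linarith)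
      (by linarith [hu.2]), Real.norm_eq_abs]
    exact (abs_integral_le_integral_abs (by linarith)).trans (integral_mono_interval hu.1.le
      (by linarith) (by linarith [hu.2]) (.of_forall fun x => abs_nonneg _)
      (hf''.abs.intervalIntegrable_of_Icc (by linarith)))
  rw [hdiff]
  simpa [abs_of_nonneg hh, mul_comm] using norm_integral_le_of_norm_le_const hstep

theorem sq_second_difference_le_mul_integral_sq (hh : 0 ≤ h)
    (hf : ContinuousOn f (Icc a (a + 2 * h))) (hf' : ContinuousOn f' (Icc a (a + 2 * h)))
    (hf'' : ContinuousOn f'' (Icc a (a + 2 * h)))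
    (hderiv : ∀ x ∈ Ioo a (a + 2 * h), HasDerivAt f (f' x) x)
    (hderiv' : ∀ x ∈ Ioo a (a + 2 * h), HasDerivAt f' (f'' x) x) :
    (f (a + 2 * h) - 2 * f (a + h) + f a) ^ 2 ≤ 2 * h ^ 3 * ∫ x in a..a + 2 * h, f'' x ^ 2 := by
  have hab : a ≤ a + 2 * h := by linarith
  have hcs := sq_intervalIntegral_le_mul_integral_sq hab
    (hf''.abs.intervalIntegrable_of_Icc hab) ((hf''.abs.pow 2).intervalIntegrable_of_Icc hab)
  simp only [sq_abs, add_sub_cancel_left] at hcs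
  calc (f (a + 2 * h) - 2 * f (a + h) + f a) ^ 2
      ≤ (h * ∫ x in a..a + 2 * h, |f'' x|) ^ 2 := by
        rw [← sq_abs]
        gcongr
        exact abs_second_difference_le_mul_integral_abs hh hf hf' hf'' hderiv hderiv'
    _ = h ^ 2 * (∫ x in a..a + 2 * h, |f'' x|) ^ 2 := by ring
    _ ≤ h ^ 2 * (2 * h * ∫ x in a..a + 2 * h, f'' x ^ 2) := by gcongr
    _ = 2 * h ^ 3 * ∫ x in a..a + 2 * h, f'' x ^ 2 := by ring

end SecondDifference

theorem ContDiffOn.hasDerivAt_iteratedDerivWithin {𝕜 F : Type*} [NontriviallyNormedField 𝕜]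
    [NormedAddCommGroup F] [NormedSpace 𝕜 F] {f : 𝕜 → F} {s : Set 𝕜} {x : 𝕜}
    {n : WithTop ℕ∞} {m : ℕ} (hf : ContDiffOn 𝕜 n f s) (hmn : m < n) (hs : UniqueDiffOn 𝕜 s)
    (hx : s ∈ nhds x) :
    HasDerivAt (iteratedDerivWithin m f s) (iteratedDerivWithin (m + 1) f s x) x := by
  rw [iteratedDerivWithin_succ, derivWithin_of_mem_nhds hx]
  exact ((hf.differentiableOn_iteratedDerivWithin hmn hs).differentiableAt hx).hasDerivAt

section ContDiffOnIcc

variable {f : ℝ → ℝ} {a b : ℝ}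

theorem ContDiffOn.sq_second_difference_le (hf : ContDiffOn ℝ 2 f (Icc a b)) {x h : ℝ}
    (hh : 0 < h) (hax : a ≤ x) (hxb : x + 2 * h ≤ b) :
    (f (x + 2 * h) - 2 * f (x + h) + f x) ^ 2
      ≤ 2 * h ^ 3 * ∫ t in x..x + 2 * h, iteratedDerivWithin 2 f (Icc a b) t ^ 2 := by
  have hs : UniqueDiffOn ℝ (Icc a b) := uniqueDiffOn_Icc (by linarith)
  have hsub : Icc x (x + 2 * h) ⊆ Icc a b := Icc_subset_Icc hax hxb
  have hcont : ∀ m : ℕ, m ≤ 2 →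
      ContinuousOn (iteratedDerivWithin m f (Icc a b)) (Icc x (x + 2 * h)) :=
    fun m hm => (hf.continuousOn_iteratedDerivWithin (by exact_mod_cast hm) hs).mono hsub
  have hderiv : ∀ m : ℕ, m < 2 → ∀ t ∈ Ioo x (x + 2 * h), HasDerivAt
      (iteratedDerivWithin m f (Icc a b)) (iteratedDerivWithin (m + 1) f (Icc a b) t) t :=
    fun m hm t ht => hf.hasDerivAt_iteratedDerivWithin (by exact_mod_cast hm) hs
      (Icc_mem_nhds (by linarith [ht.1]) (by linarith [ht.2]))
  simpa only [iteratedDerivWithin_zero] using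
    sq_second_difference_le_mul_integral_sq hh.le (hcont 0 (by norm_num)) (hcont 1 (by norm_num))
      (hcont 2 le_rfl) (hderiv 0 (by norm_num)) (hderiv 1 (by norm_num))

/- `deriv f` and `iteratedDeriv 2 f` may take junk values at `a` and `b`; the derivatives within
`Icc a b` are continuous up to the endpoints and agree with them on `Ioo a b`. -/
theorem ContDiffOn.integral_sq_iteratedDerivWithin_two_le (hf : ContDiffOn ℝ 2 f (Icc a b))
    (hab : a < b) :
    ∫ x in a..b, iteratedDerivWithin 2 f (Icc a b) x ^ 2
      ≤ ∫ x in a..b, (f x ^ 2 + deriv f x ^ 2 + iteratedDeriv 2 f x ^ 2) := by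
  have hs : UniqueDiffOn ℝ (Icc a b) := uniqueDiffOn_Icc hab
  have hcont : ∀ m : ℕ, m ≤ 2 → ContinuousOn (iteratedDerivWithin m f (Icc a b)) (Icc a b) :=
    fun m hm => hf.continuousOn_iteratedDerivWithin (by exact_mod_cast hm) hs
  have hinterior : ∀ m : ℕ, m ≤ 2 → EqOn (iteratedDeriv m f) (iteratedDerivWithin m f (Icc a b))
      (Ioo a b) := fun m hm x hx =>
    (iteratedDerivWithin_eq_iteratedDeriv hs
      ((hf.contDiffAt (Icc_mem_nhds hx.1 hx.2)).of_le (by exact_mod_cast hm))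
      (Ioo_subset_Icc_self hx)).symm
  have hcongr : ∫ x in a..b, (f x ^ 2 + deriv f x ^ 2 + iteratedDeriv 2 f x ^ 2)
      = ∫ x in a..b, (f x ^ 2 + iteratedDerivWithin 1 f (Icc a b) x ^ 2
          + iteratedDerivWithin 2 f (Icc a b) x ^ 2) := by
    simp only [integral_of_le hab.le, integral_Ioc_eq_integral_Ioo]
    refine setIntegral_congr_fun measurableSet_Ioo fun x hx => ?_
    rw [← iteratedDeriv_one, hinterior 1 (by norm_num) hx, hinterior 2 le_rfl hx]
  rw [hcongr]
  refine integral_mono_on hab.le (((hcont 2 le_rfl).pow 2).intervalIntegrable_of_Icc hab.le)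
    ((((hf.continuousOn.pow 2).add ((hcont 1 (by norm_num)).pow 2)).add
      ((hcont 2 le_rfl).pow 2)).intervalIntegrable_of_Icc hab.le) fun x _ => ?_
  nlinarith [sq_nonneg (f x), sq_nonneg (iteratedDerivWithin 1 f (Icc a b) x)]

end ContDiffOnIcc

theorem sum_range_integral_le {g : ℝ → ℝ} {T s : ℝ} {K : ℕ} (hs : 0 ≤ s) (hK : K * s ≤ T)
    (hg : IntervalIntegrable g volume 0 T) (hg0 : ∀ x, 0 ≤ g x) :
    ∑ k ∈ range K, ∫ x in k * s..(k + 1) * s, g x ≤ ∫ x in 0..T, g x := by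
  have hcell : ∀ k < K, IntervalIntegrable g volume (k * s) ((k + 1 : ℕ) * s) := by
    intro k hk
    have hk : ((k + 1 : ℕ) : ℝ) * s ≤ T :=
      (mul_le_mul_of_nonneg_right (by exact_mod_cast hk) hs).trans hK
    refine hg.mono_set ?_
    rw [Set.uIcc_of_le (by gcongr; simp), Set.uIcc_of_le ((by positivity : (0 : ℝ) ≤ _).trans hk)]
    exact Icc_subset_Icc (by positivity) hk
  have := sum_integral_adjacent_intervals (a := fun k : ℕ => (k : ℝ) * s) hcell
  push_cast at this
  rw [this, zero_mul]
  exact integral_mono_interval le_rfl (by positivity) hK (.of_forall hg0) hg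

theorem sum_Ico_add_pred_le_two_mul_sum_range {c : ℕ → ℝ} (hc : ∀ k, 0 ≤ c k) (K : ℕ) :
    ∑ k ∈ Ico 1 K, (c (k - 1) + c k) ≤ 2 * ∑ k ∈ range K, c k := by
  rcases K with _ | n
  · simp
  rw [sum_Ico_eq_sum_range, Nat.add_sub_cancel, sum_add_distrib]
  simp only [add_comm 1, Nat.add_sub_cancel]
  have h1 := sum_range_succ c n
  have h2 := sum_range_succ' c n
  linarith [hc n, hc 0]

section Grid

variable {f : ℝ → ℝ} {T s : ℝ} {K : ℕ}

theorem ContDiffOn.sum_sq_half_step_second_difference_le (hf : ContDiffOn ℝ 2 f (Icc 0 T))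
    (hT : 0 < T) (hs : 0 < s) (hK : K * s ≤ T) :
    s * ∑ k ∈ range K, (4 * (f ((k + 1) * s) - 2 * f ((k + 1 / 2) * s) + f (k * s)) / s ^ 2) ^ 2
      ≤ 4 * ∫ x in 0..T, iteratedDerivWithin 2 f (Icc 0 T) x ^ 2 := by
  have hcell : ∀ k ∈ range K,
      (4 * (f ((k + 1) * s) - 2 * f ((k + 1 / 2) * s) + f (k * s)) / s ^ 2) ^ 2
        ≤ 4 / s * ∫ x in k * s..(k + 1) * s, iteratedDerivWithin 2 f (Icc 0 T) x ^ 2 := by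
    intro k hk
    have hk : (k + 1 : ℝ) * s ≤ T :=
      (mul_le_mul_of_nonneg_right (by exact_mod_cast mem_range.mp hk) hs.le).trans hK
    have hsd := hf.sq_second_difference_le (x := k * s) (h := s / 2) (by positivity)
      (by positivity) (by linarith)
    rw [show k * s + 2 * (s / 2) = (k + 1) * s by ring,
      show k * s + s / 2 = (k + 1 / 2) * s by ring] at hsd
    calc _ = 16 / s ^ 4 * (f ((k + 1) * s) - 2 * f ((k + 1 / 2) * s) + f (k * s)) ^ 2 := by
          ring
      _ ≤ 16 / s ^ 4 * (2 * (s / 2) ^ 3 *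
            ∫ x in k * s..(k + 1) * s, iteratedDerivWithin 2 f (Icc 0 T) x ^ 2) := by gcongr
      _ = _ := by field_simp; ring
  have hg : ContinuousOn (fun x => iteratedDerivWithin 2 f (Icc 0 T) x ^ 2) (Icc 0 T) :=
    (hf.continuousOn_iteratedDerivWithin le_rfl (uniqueDiffOn_Icc hT)).pow 2
  calc _ ≤ s * ∑ k ∈ range K,
        4 / s * ∫ x in k * s..(k + 1) * s, iteratedDerivWithin 2 f (Icc 0 T) x ^ 2 := by
        gcongr with k hk
        exact hcell k hk
    _ = 4 * ∑ k ∈ range K,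
        ∫ x in k * s..(k + 1) * s, iteratedDerivWithin 2 f (Icc 0 T) x ^ 2 := by
        rw [← mul_sum]
        field_simp
    _ ≤ _ := by
        gcongr
        exact sum_range_integral_le hs.le hK (hg.intervalIntegrable_of_Icc hT.le)
          fun x => sq_nonneg _

theorem ContDiffOn.sum_sq_second_difference_le (hf : ContDiffOn ℝ 2 f (Icc 0 T))
    (hT : 0 < T) (hs : 0 < s) (hK : K * s ≤ T) :
    s * ∑ k ∈ Ico 1 K, ((f ((k + 1) * s) - 2 * f (k * s) + f ((k - 1) * s)) / s ^ 2) ^ 2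
      ≤ 4 * ∫ x in 0..T, iteratedDerivWithin 2 f (Icc 0 T) x ^ 2 := by
  set g := fun x => iteratedDerivWithin 2 f (Icc 0 T) x ^ 2
  set c := fun k : ℕ => ∫ x in k * s..(k + 1) * s, g x with hc_def
  have hg : ContinuousOn g (Icc 0 T) :=
    (hf.continuousOn_iteratedDerivWithin le_rfl (uniqueDiffOn_Icc hT)).pow 2
  have hcell : ∀ k ∈ Finset.Ico 1 K,
      ((f ((k + 1) * s) - 2 * f (k * s) + f ((k - 1) * s)) / s ^ 2) ^ 2
        ≤ 2 / s * (c (k - 1) + c k) := by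
    intro k hk
    obtain ⟨hk1, hkK⟩ := Finset.mem_Ico.mp hk
    have hk1 : (1 : ℝ) ≤ k := by exact_mod_cast hk1
    have hkT : (k + 1 : ℝ) * s ≤ T :=
      (mul_le_mul_of_nonneg_right (by exact_mod_cast hkK) hs.le).trans hK
    have hk0 : 0 ≤ (k - 1 : ℝ) * s := mul_nonneg (by linarith) hs.le
    have hsd := hf.sq_second_difference_le (x := (k - 1) * s) (h := s) hs hk0 (by linarith)
    rw [show (k - 1) * s + 2 * s = (k + 1) * s by ring,
      show (k - 1) * s + s = k * s by ring,
      ← integral_add_adjacent_intervals (b := k * s)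
        ((hg.mono (Icc_subset_Icc hk0 (by nlinarith))).intervalIntegrable_of_Icc (by nlinarith))
        ((hg.mono (Icc_subset_Icc (by nlinarith) hkT)).intervalIntegrable_of_Icc (by nlinarith))]
      at hsd
    have hpred : ((k - 1 : ℕ) : ℝ) = k - 1 := by
      rw [Nat.cast_sub (by exact_mod_cast hk1), Nat.cast_one]
    simp only [hc_def, hpred, sub_add_cancel]
    calc _ = 1 / s ^ 4 * (f ((k + 1) * s) - 2 * f (k * s) + f ((k - 1) * s)) ^ 2 := by ring
      _ ≤ 1 / s ^ 4 * (2 * s ^ 3 * ((∫ x in (k - 1) * s..k * s, g x)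
            + ∫ x in k * s..(k + 1) * s, g x)) := by gcongr
      _ = _ := by field_simp
  calc _ ≤ s * ∑ k ∈ Ico 1 K, 2 / s * (c (k - 1) + c k) := by
        gcongr with k hk
        exact hcell k hk
    _ = 2 * ∑ k ∈ Ico 1 K, (c (k - 1) + c k) := by
        rw [← mul_sum]
        field_simp
    _ ≤ 2 * (2 * ∑ k ∈ range K, c k) := by
        gcongr
        exact sum_Ico_add_pred_le_two_mul_sum_range (c := c)
          (fun k => integral_nonneg (by gcongr; simp) fun x _ => sq_nonneg _) K
    _ = 4 * ∑ k ∈ range K, c k := by ring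
    _ ≤ _ := by
        gcongr
        exact sum_range_integral_le hs.le hK (hg.intervalIntegrable_of_Icc hT.le)
          fun x => sq_nonneg _

end Grid

theorem second_difference_quotient_bound_general (T : ℝ) :
    ∃ C > (0 : ℝ), ∀ s : ℝ, 0 < s → s ≤ T →
      ∀ f : ℝ → ℝ, ContDiffOn ℝ 2 f (Set.Icc 0 T) →
        Real.sqrt (s * ∑ k ∈ Finset.range ⌊T / s⌋₊,
            (4 * (f (((k : ℝ) + 1) * s) - 2 * f (((k : ℝ) + 1 / 2) * s)
              + f ((k : ℝ) * s)) / s ^ 2) ^ 2)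
          ≤ C * Real.sqrt (∫ t in (0 : ℝ)..T,
              (f t ^ 2 + deriv f t ^ 2 + iteratedDeriv 2 f t ^ 2)) ∧
        Real.sqrt (s * ∑ k ∈ Finset.Ico 1 ⌊T / s⌋₊,
            ((f (((k : ℝ) + 1) * s) - 2 * f ((k : ℝ) * s)
              + f (((k : ℝ) - 1) * s)) / s ^ 2) ^ 2)
          ≤ C * Real.sqrt (∫ t in (0 : ℝ)..T,
              (f t ^ 2 + deriv f t ^ 2 + iteratedDeriv 2 f t ^ 2)) := by
  refine ⟨2, two_pos, fun s hs hsT f hf => ?_⟩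
  have hT : 0 < T := hs.trans_le hsT
  have hK : (⌊T / s⌋₊ : ℝ) * s ≤ T := (le_div_iff₀ hs).mp (Nat.floor_le (by positivity))
  have hbound := hf.integral_sq_iteratedDerivWithin_two_le hT
  have hsqrt : ∀ X, X ≤ 4 * ∫ x in 0..T, iteratedDerivWithin 2 f (Icc 0 T) x ^ 2 →
      Real.sqrt X ≤ 2 * Real.sqrt (∫ t in (0 : ℝ)..T,
        (f t ^ 2 + deriv f t ^ 2 + iteratedDeriv 2 f t ^ 2)) := fun X hX => by
    have h0 : 0 ≤ ∫ x in 0..T, iteratedDerivWithin 2 f (Icc 0 T) x ^ 2 :=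
      integral_nonneg hT.le fun x _ => sq_nonneg _
    rw [Real.sqrt_le_iff, mul_pow, Real.sq_sqrt (h0.trans hbound)]
    exact ⟨by positivity, by linarith⟩
  exact ⟨hsqrt _ (hf.sum_sq_half_step_second_difference_le hT hs hK),
    hsqrt _ (hf.sum_sq_second_difference_le hT hs hK)⟩

/-- Boundedness of second difference quotients in discrete `L²`: for `T > 0` there is a
constant `C > 0` depending only on `T` such that for every time step `0 < s ≤ T` and every
`f` of class `C²` on `[0, T]`, with `K = ⌊T/s⌋`, `t^k = k·s`, `t^{k+1/2} = (k + 1/2)·s`,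
both discrete `L²` norms in time of `D²_{t/2}f^{k+1/2} = 4(f(t^{k+1}) − 2f(t^{k+1/2}) + f(t^k))/s²`
(over `k = 0, …, K−1`) and of `D²ₜf^k = (f(t^{k+1}) − 2f(t^k) + f(t^{k−1}))/s²`
(over `k = 1, …, K−1`) are bounded by `C (∫₀ᵀ (f² + f'² + f''²))^{1/2}`. -/
theorem second_difference_quotient_bound (T : ℝ) (hT : 0 < T) :
    ∃ C > (0 : ℝ), ∀ s : ℝ, 0 < s → s ≤ T →
      ∀ f : ℝ → ℝ, ContDiffOn ℝ 2 f (Set.Icc 0 T) →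
        Real.sqrt (s * ∑ k ∈ Finset.range ⌊T / s⌋₊,
            (4 * (f (((k : ℝ) + 1) * s) - 2 * f (((k : ℝ) + 1 / 2) * s)
              + f ((k : ℝ) * s)) / s ^ 2) ^ 2)
          ≤ C * Real.sqrt (∫ t in (0 : ℝ)..T,
              (f t ^ 2 + deriv f t ^ 2 + iteratedDeriv 2 f t ^ 2)) ∧
        Real.sqrt (s * ∑ k ∈ Finset.Ico 1 ⌊T / s⌋₊,
            ((f (((k : ℝ) + 1) * s) - 2 * f ((k : ℝ) * s)
              + f (((k : ℝ) - 1) * s)) / s ^ 2) ^ 2)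
          ≤ C * Real.sqrt (∫ t in (0 : ℝ)..T,
              (f t ^ 2 + deriv f t ^ 2 + iteratedDeriv 2 f t ^ 2)) :=
  second_difference_quotient_bound_general T
end

section
/- Spatial consistency of the discrete Laplacian on trigonometric polynomials without aliasing error: let L > 0, let N be an even positive integer, h = L/N, and grid points x_i = i·h for i = 0, ..., N−1. Let κ ∈ {1, 2, 3}. There exists a constant C > 0 depending only on L and κ such that for every real-valued trigonometric polynomial f(x,y) = Σ_{k,l = −N/2+1}^{N/2} f̂_{k,l}·e^{(2πi/L)(kx + ly)}, one has (h²·Σ_{i,j=0}^{N−1} ((Δ^κ f)(x_i, x_j) − (Δ_h^κ f^g)(i,j))²)^{1/2} ≤ C·h²·(Σ_{k,l = −N/2+1}^{N/2} (1 + (2π/L)²(k² + l²))^{2+2κ}·|f̂_{k,l}|²)^{1/2}, where Δ is the continuous Laplacian, Δ^κ its κ-fold iterate, f^g is the periodic grid function f^g(i,j) = f(x_i, x_j) on (ZMod N) × (ZMod N), and Δ_h^κ is the κ-fold iterate of the discrete Laplacian. -/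
open Finset Real

noncomputable section

/-- Periodic grid functions on an `N × N` grid (indices taken modulo `N`). -/
abbrev Grid (N : ℕ) := ZMod N × ZMod N → ℝ

/-- The five-point discrete Laplacian. -/
def lapH {N : ℕ} (h : ℝ) (φ : Grid N) : Grid N :=
  fun p => (φ (p.1 + 1, p.2) + φ (p.1 - 1, p.2) + φ (p.1, p.2 + 1) + φ (p.1, p.2 - 1)
    - 4 * φ p) / h ^ 2

/-- The continuous two-dimensional Laplacian `Δf = ∂²f/∂x² + ∂²f/∂y²`. -/
def contLap (f : ℝ → ℝ → ℝ) : ℝ → ℝ → ℝ :=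
  fun x y => iteratedDeriv 2 (fun u => f u y) x + iteratedDeriv 2 (fun v => f x v) y


/-!
The plane wave `e^{i(ξx + ηy)}`, `ξ = 2πk/L`, `η = 2πl/L`, is an eigenfunction of `Δ` with
eigenvalue `-(ξ² + η²)`. Sampled at the grid points `(ih, jh)` it becomes a character of
`ZMod N × ZMod N`, hence an eigenfunction of `Δₕ` with eigenvalue `(2 cos ξh + 2 cos ηh - 4) / h²`.
The frequencies `-N/2 < k ≤ N/2` are pairwise incongruent modulo `N`, so the sampled waves stay
orthogonal on the grid (there is no aliasing) and Parseval computes the discrete `L²` error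
exactly: it is `N` times the `ℓ²` norm of the coefficients weighted by the difference of the
`κ`-th powers of the two eigenvalues. Since `0 ≤ θ² - (2 - 2 cos θ) ≤ θ⁴`, that difference is at
most `κ h² (1 + ξ² + η²)^(κ+1)`.
-/

open scoped Complex ComplexConjugate
open Complex (I)

lemma ofReal_deriv_eq_of_hasDerivAt {g : ℝ → ℝ} {F : ℝ → ℂ} {F' : ℂ} {t : ℝ}
    (hg : ∀ s, (g s : ℂ) = F s) (hF : HasDerivAt F F' t) : ((deriv g t : ℝ) : ℂ) = F' := by
  have hre : HasDerivAt g F'.re t := by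
    have hgF : g = fun s => (F s).re := funext fun s => by rw [← hg s, Complex.ofReal_re]
    rw [hgF]
    exact Complex.reCLM.hasFDerivAt.comp_hasDerivAt t hF
  rw [hre.deriv]
  have hF' : HasDerivAt F (F'.re : ℂ) t := by simpa only [hg] using hre.ofReal_comp
  exact hF'.unique hF

section ExpSum

variable {ι : Type*} {s : Finset ι}

lemma ofReal_deriv_of_eq_sum_exp {a ω : ι → ℂ} {g : ℝ → ℝ}
    (hg : ∀ t, (g t : ℂ) = ∑ j ∈ s, a j * cexp (ω j * t)) (t : ℝ) :
    ((deriv g t : ℝ) : ℂ) = ∑ j ∈ s, a j * ω j * cexp (ω j * t) := by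
  refine ofReal_deriv_eq_of_hasDerivAt hg (HasDerivAt.fun_sum fun j _ => ?_)
  have := (((hasDerivAt_id t).ofReal_comp.const_mul (ω j)).cexp).const_mul (a j)
  simpa [mul_comm, mul_left_comm, mul_assoc] using this

lemma ofReal_iteratedDeriv_two_of_eq_sum_exp {a ω : ι → ℂ} {g : ℝ → ℝ}
    (hg : ∀ t, (g t : ℂ) = ∑ j ∈ s, a j * cexp (ω j * t)) (t : ℝ) :
    ((iteratedDeriv 2 g t : ℝ) : ℂ) = ∑ j ∈ s, a j * ω j ^ 2 * cexp (ω j * t) := by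
  rw [iteratedDeriv_succ, iteratedDeriv_one,
    ofReal_deriv_of_eq_sum_exp (ofReal_deriv_of_eq_sum_exp hg) t]
  simp only [mul_assoc, sq]

lemma ofReal_contLap_of_eq_sum_exp {a α β : ι → ℂ} {f : ℝ → ℝ → ℝ}
    (hf : ∀ x y, (f x y : ℂ) = ∑ j ∈ s, a j * cexp (α j * x + β j * y)) (x y : ℝ) :
    (contLap f x y : ℂ) =
      ∑ j ∈ s, a j * (α j ^ 2 + β j ^ 2) * cexp (α j * x + β j * y) := by
  have hx : ∀ u : ℝ, (f u y : ℂ) = ∑ j ∈ s, a j * cexp (β j * y) * cexp (α j * u) := fun u => by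
    simp only [hf, Complex.exp_add, mul_comm, mul_left_comm]
  have hy : ∀ v : ℝ, (f x v : ℂ) = ∑ j ∈ s, a j * cexp (α j * x) * cexp (β j * v) := fun v => by
    simp only [hf, Complex.exp_add, mul_assoc]
  push_cast [contLap]
  rw [ofReal_iteratedDeriv_two_of_eq_sum_exp hx, ofReal_iteratedDeriv_two_of_eq_sum_exp hy,
    ← Finset.sum_add_distrib]
  refine Finset.sum_congr rfl fun j _ => ?_
  rw [Complex.exp_add]
  ring

lemma ofReal_contLap_iterate_of_eq_sum_exp {a α β : ι → ℂ} {f : ℝ → ℝ → ℝ}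
    (hf : ∀ x y, (f x y : ℂ) = ∑ j ∈ s, a j * cexp (α j * x + β j * y)) (m : ℕ) (x y : ℝ) :
    ((contLap^[m] f) x y : ℂ) =
      ∑ j ∈ s, a j * (α j ^ 2 + β j ^ 2) ^ m * cexp (α j * x + β j * y) := by
  induction m generalizing x y with
  | zero => simp [hf]
  | succ m ih =>
    rw [Function.iterate_succ_apply', ofReal_contLap_of_eq_sum_exp ih]
    simp only [pow_succ, mul_assoc]

end ExpSum

section GridEigen

variable {ι : Type*} {s : Finset ι} {N : ℕ}

def lapHEigenvalue (h : ℝ) (ψ : AddChar (ZMod N × ZMod N) ℂ) : ℂ :=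
  (ψ (1, 0) + ψ (-1, 0) + ψ (0, 1) + ψ (0, -1) - 4) / (h : ℂ) ^ 2

lemma ofReal_lapH_of_eq_sum_addChar {h : ℝ} {a : ι → ℂ}
    {ψ : ι → AddChar (ZMod N × ZMod N) ℂ} {φ : Grid N}
    (hφ : ∀ p, (φ p : ℂ) = ∑ j ∈ s, a j * ψ j p) (p : ZMod N × ZMod N) :
    (lapH h φ p : ℂ) = ∑ j ∈ s, a j * lapHEigenvalue h (ψ j) * ψ j p := by
  have shift : ∀ j (d : ZMod N × ZMod N), ψ j (p + d) = ψ j d * ψ j p := fun j d => by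
    rw [AddChar.map_add_eq_mul, mul_comm]
  have h₁ : (p.1 + 1, p.2) = p + (1, 0) := Prod.ext rfl (add_zero _).symm
  have h₂ : (p.1 - 1, p.2) = p + (-1, 0) := Prod.ext (sub_eq_add_neg _ _) (add_zero _).symm
  have h₃ : (p.1, p.2 + 1) = p + (0, 1) := Prod.ext (add_zero _).symm rfl
  have h₄ : (p.1, p.2 - 1) = p + (0, -1) := Prod.ext (add_zero _).symm (sub_eq_add_neg _ _)
  push_cast [lapH]
  simp only [lapHEigenvalue, hφ, h₁, h₂, h₃, h₄, shift, Finset.mul_sum,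
    ← Finset.sum_add_distrib, ← Finset.sum_sub_distrib, Finset.sum_div]
  refine Finset.sum_congr rfl fun j _ => ?_
  ring

lemma ofReal_lapH_iterate_of_eq_sum_addChar {h : ℝ} {a : ι → ℂ}
    {ψ : ι → AddChar (ZMod N × ZMod N) ℂ} {φ : Grid N}
    (hφ : ∀ p, (φ p : ℂ) = ∑ j ∈ s, a j * ψ j p) (m : ℕ) (p : ZMod N × ZMod N) :
    (((lapH h)^[m] φ) p : ℂ) = ∑ j ∈ s, a j * lapHEigenvalue h (ψ j) ^ m * ψ j p := by
  induction m generalizing p with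
  | zero => simp [hφ]
  | succ m ih =>
    rw [Function.iterate_succ_apply', ofReal_lapH_of_eq_sum_addChar ih]
    simp only [pow_succ, mul_assoc]

end GridEigen

lemma AddChar.sum_mul_conj {G : Type*} [AddCommGroup G] [Fintype G] (ψ χ : AddChar G ℂ) :
    ∑ x, ψ x * conj (χ x) = if ψ = χ then (Fintype.card G : ℂ) else 0 := by
  simp_rw [← AddChar.map_neg_eq_conj, ← AddChar.sub_apply]
  rw [AddChar.sum_eq_ite]
  exact if_congr sub_eq_zero rfl rfl

lemma sum_norm_sq_sum_addChar {G ι : Type*} [AddCommGroup G] [Fintype G] {s : Finset ι}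
    {ψ : ι → AddChar G ℂ} (hψ : Set.InjOn ψ s) (a : ι → ℂ) :
    ∑ x, ‖∑ i ∈ s, a i * ψ i x‖ ^ 2 = Fintype.card G * ∑ i ∈ s, ‖a i‖ ^ 2 := by
  classical
  apply Complex.ofReal_injective
  push_cast
  simp_rw [← Complex.mul_conj', map_sum, map_mul, Finset.sum_mul_sum, Finset.mul_sum]
  rw [Finset.sum_comm]
  refine Finset.sum_congr rfl fun i hi => ?_
  rw [Finset.sum_comm]
  have hortho : ∀ j ∈ s, ∑ x, a i * ψ i x * (conj (a j) * conj (ψ j x)) =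
      if i = j then (Fintype.card G : ℂ) * (a i * conj (a i)) else 0 := fun j hj => by
    rw [Finset.sum_congr rfl fun x _ => mul_mul_mul_comm _ _ _ _, ← Finset.mul_sum,
      AddChar.sum_mul_conj]
    by_cases h : i = j
    · subst h
      simp only [if_true]
      ring
    · simp only [h, hψ.ne hi hj h, if_false, mul_zero]
  rw [Finset.sum_congr rfl hortho, Finset.sum_ite_eq s i, if_pos hi]

def lapSymbol (ξ η : ℝ) : ℝ := -(ξ ^ 2 + η ^ 2)

def lapHSymbol (h ξ η : ℝ) : ℝ := (2 * cos (ξ * h) + 2 * cos (η * h) - 4) / h ^ 2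

lemma sq_sub_two_sub_two_cos_mem_Icc (θ : ℝ) :
    θ ^ 2 - (2 - 2 * cos θ) ∈ Set.Icc 0 (θ ^ 4) := by
  have hlow := one_sub_sq_div_two_le_cos (x := θ)
  refine ⟨by linarith, ?_⟩
  rcases le_or_gt |θ| 1 with hθ | hθ
  · have hcos := (abs_le.1 (Real.cos_bound hθ)).2
    have h4 : |θ| ^ 4 = θ ^ 4 := by rw [← abs_pow, abs_of_nonneg (by positivity)]
    rw [h4] at hcos
    nlinarith [pow_two_nonneg (θ ^ 2)]
  · have hθ2 : 1 ≤ θ ^ 2 := by nlinarith [sq_abs θ]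
    nlinarith [neg_one_le_cos θ, cos_le_one θ]

lemma abs_lapSymbol_pow_sub_lapHSymbol_pow_le {h : ℝ} (hh : h ≠ 0) (ξ η : ℝ) (κ : ℕ) :
    |lapSymbol ξ η ^ κ - lapHSymbol h ξ η ^ κ| ≤ κ * h ^ 2 * (1 + ξ ^ 2 + η ^ 2) ^ (κ + 1) := by
  obtain ⟨hu₀, hu₁⟩ := sq_sub_two_sub_two_cos_mem_Icc (ξ * h)
  obtain ⟨hv₀, hv₁⟩ := sq_sub_two_sub_two_cos_mem_Icc (η * h)
  set u := (ξ * h) ^ 2 - (2 - 2 * cos (ξ * h))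
  set v := (η * h) ^ 2 - (2 - 2 * cos (η * h))
  set M := ξ ^ 2 + η ^ 2 with hM
  have hh2 : 0 < h ^ 2 := by positivity
  have hM0 : 0 ≤ M := by positivity
  have hcont : lapSymbol ξ η = -M := rfl
  have hdisc : lapHSymbol h ξ η = -M + (u + v) / h ^ 2 := by
    simp only [lapHSymbol, u, v, hM]
    field_simp
    ring
  have huv : u + v ≤ h ^ 2 * M := by
    nlinarith [cos_le_one (ξ * h), cos_le_one (η * h)]
  have hcont_abs : |lapSymbol ξ η| ≤ M := by rw [hcont, abs_neg, abs_of_nonneg hM0]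
  have hdisc_abs : |lapHSymbol h ξ η| ≤ M := by
    rw [hdisc, abs_le]
    constructor
    · linarith [div_nonneg (add_nonneg hu₀ hv₀) hh2.le]
    · linarith [(div_le_iff₀ hh2).2 (by linarith : u + v ≤ M * h ^ 2)]
  have hdiff : |lapSymbol ξ η - lapHSymbol h ξ η| ≤ h ^ 2 * M ^ 2 := by
    rw [hcont, hdisc, show -M - (-M + (u + v) / h ^ 2) = -((u + v) / h ^ 2) by ring, abs_neg,
      abs_div, abs_of_nonneg (add_nonneg hu₀ hv₀), abs_of_pos hh2, div_le_iff₀ hh2]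
    have hquartic : (ξ * h) ^ 4 + (η * h) ^ 4 ≤ h ^ 2 * M ^ 2 * h ^ 2 := by
      rw [hM]
      nlinarith [sq_nonneg (ξ * η * h ^ 2)]
    linarith
  calc |lapSymbol ξ η ^ κ - lapHSymbol h ξ η ^ κ|
      ≤ |lapSymbol ξ η - lapHSymbol h ξ η| * κ
          * max |lapSymbol ξ η| |lapHSymbol h ξ η| ^ (κ - 1) := abs_pow_sub_pow_le ..
    _ ≤ h ^ 2 * M ^ 2 * κ * M ^ (κ - 1) := by gcongr; exact max_le hcont_abs hdisc_abs
    _ ≤ κ * h ^ 2 * (1 + M) ^ (κ + 1) := by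
        rcases κ with _ | κ
        · simp
        · rw [Nat.add_sub_cancel,
            show h ^ 2 * M ^ 2 * ↑(κ + 1) * M ^ κ = ↑(κ + 1) * h ^ 2 * M ^ (κ + 1 + 1) by ring]
          gcongr
          linarith
    _ = κ * h ^ 2 * (1 + ξ ^ 2 + η ^ 2) ^ (κ + 1) := by rw [hM, add_assoc]

def waveNumber (L : ℝ) (k : ℤ) : ℝ := 2 * π * k / L

lemma sum_norm_sq_mul_symbol_error_sq_le {h : ℝ} (hh : h ≠ 0) (L : ℝ) (A : Finset ℤ)
    (c : ℤ → ℤ → ℂ) (κ : ℕ) :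
    ∑ k ∈ A, ∑ l ∈ A, ‖c k l‖ ^ 2 * (lapSymbol (waveNumber L k) (waveNumber L l) ^ κ
      - lapHSymbol h (waveNumber L k) (waveNumber L l) ^ κ) ^ 2 ≤ (κ * h ^ 2) ^ 2 *
      ∑ k ∈ A, ∑ l ∈ A,
        (1 + (2 * π / L) ^ 2 * ((k : ℝ) ^ 2 + (l : ℝ) ^ 2)) ^ (2 + 2 * κ) * ‖c k l‖ ^ 2 := by
  simp only [Finset.mul_sum]
  refine Finset.sum_le_sum fun k _ => Finset.sum_le_sum fun l _ => ?_
  have hweight : 1 + waveNumber L k ^ 2 + waveNumber L l ^ 2 =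
      1 + (2 * π / L) ^ 2 * ((k : ℝ) ^ 2 + (l : ℝ) ^ 2) := by
    simp only [waveNumber]
    ring
  have hsymb := abs_lapSymbol_pow_sub_lapHSymbol_pow_le hh (waveNumber L k) (waveNumber L l) κ
  rw [hweight, ← sq_le_sq₀ (abs_nonneg _) (by positivity), sq_abs] at hsymb
  calc _ ≤ ‖c k l‖ ^ 2 *
        (κ * h ^ 2 * (1 + (2 * π / L) ^ 2 * ((k : ℝ) ^ 2 + (l : ℝ) ^ 2)) ^ (κ + 1)) ^ 2 := by
        gcongr
    _ = _ := by ring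

def gridSample {N : ℕ} (h : ℝ) (f : ℝ → ℝ → ℝ) : Grid N :=
  fun p => f (p.1.val * h) (p.2.val * h)

lemma injOn_intCast_Ioc (N : ℕ) (a : ℤ) :
    Set.InjOn (Int.cast : ℤ → ZMod N) (Set.Ioc a (a + N)) := by
  intro k hk l hl hkl
  rw [ZMod.intCast_eq_intCast_iff_dvd_sub] at hkl
  have hlt : |l - k| < N := by
    rw [abs_lt]
    constructor <;> linarith [hk.1, hk.2, hl.1, hl.2]
  linarith [Int.eq_zero_of_abs_lt_dvd hkl hlt]

section GridChar

variable {N : ℕ} [NeZero N]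

def gridChar (r : ZMod N × ZMod N) : AddChar (ZMod N × ZMod N) ℂ :=
  (ZMod.stdAddChar.mulShift r.1).compAddMonoidHom (AddMonoidHom.fst _ _) *
    (ZMod.stdAddChar.mulShift r.2).compAddMonoidHom (AddMonoidHom.snd _ _)

lemma gridChar_apply (r p : ZMod N × ZMod N) :
    gridChar r p = ZMod.stdAddChar (r.1 * p.1) * ZMod.stdAddChar (r.2 * p.2) := rfl

lemma gridChar_injective : Function.Injective (gridChar (N := N)) := by
  intro r r' h
  have h₁ := DFunLike.congr_fun h (1, 0)
  have h₂ := DFunLike.congr_fun h (0, 1)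
  simp only [gridChar_apply, mul_one, one_mul, mul_zero, AddChar.map_zero_eq_one] at h₁ h₂
  exact Prod.ext (ZMod.injective_stdAddChar h₁) (ZMod.injective_stdAddChar h₂)

lemma cexp_waveNumber_grid_eq_gridChar {L : ℝ} (hL : L ≠ 0) (k l : ℤ) (p : ZMod N × ZMod N) :
    cexp (waveNumber L k * I * ((p.1.val * (L / N) : ℝ) : ℂ)
        + waveNumber L l * I * ((p.2.val * (L / N) : ℝ) : ℂ)) =
      gridChar ((k : ZMod N), (l : ZMod N)) p := by
  have hchar : ∀ (m : ℤ) (x : ZMod N),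
      ZMod.stdAddChar ((m : ZMod N) * x) = cexp (2 * π * I * (m * x.val : ℤ) / N) := by
    intro m x
    rw [← ZMod.stdAddChar_coe]
    push_cast
    rw [ZMod.natCast_zmod_val]
  have hN : (N : ℂ) ≠ 0 := Nat.cast_ne_zero.2 (NeZero.ne N)
  have hLc : (L : ℂ) ≠ 0 := Complex.ofReal_ne_zero.2 hL
  rw [gridChar_apply, hchar, hchar, ← Complex.exp_add, waveNumber, waveNumber]
  congr 1
  push_cast
  field_simp

lemma stdAddChar_add_stdAddChar_neg (k : ℤ) :
    ZMod.stdAddChar (k : ZMod N) + ZMod.stdAddChar (-(k : ZMod N)) =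
      2 * cos (2 * π * k / N) := by
  rw [AddChar.map_neg_eq_conj, Complex.add_conj, ZMod.stdAddChar_coe,
    show 2 * π * I * k / N = ((2 * π * k / N : ℝ) : ℂ) * I by push_cast; ring,
    Complex.exp_ofReal_mul_I_re]
  push_cast
  ring

lemma lapHEigenvalue_gridChar {L : ℝ} (hL : L ≠ 0) (k l : ℤ) :
    lapHEigenvalue (L / N) (gridChar ((k : ZMod N), (l : ZMod N))) =
      lapHSymbol (L / N) (waveNumber L k) (waveNumber L l) := by
  have hN : (N : ℝ) ≠ 0 := Nat.cast_ne_zero.2 (NeZero.ne N)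
  have hθ : ∀ m : ℤ, waveNumber L m * (L / N) = 2 * π * m / N := fun m => by
    rw [waveNumber]
    field_simp
  simp only [lapHEigenvalue, gridChar_apply, mul_one, mul_zero, mul_neg, AddChar.map_zero_eq_one,
    one_mul]
  rw [add_assoc (_ + _), stdAddChar_add_stdAddChar_neg, stdAddChar_add_stdAddChar_neg,
    lapHSymbol, hθ, hθ]
  push_cast
  ring

theorem sum_sq_contLap_iterate_sub_lapH_iterate {L : ℝ} (hL : L ≠ 0) {s : Finset (ℤ × ℤ)}
    (hs : Set.InjOn (fun q : ℤ × ℤ => ((q.1 : ZMod N), (q.2 : ZMod N))) s) (a : ℤ × ℤ → ℂ)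
    {f : ℝ → ℝ → ℝ} (hf : ∀ x y : ℝ, (f x y : ℂ) =
      ∑ q ∈ s, a q * cexp (waveNumber L q.1 * I * x + waveNumber L q.2 * I * y)) (κ : ℕ) :
    ∑ p : ZMod N × ZMod N, ((contLap^[κ] f) (p.1.val * (L / N)) (p.2.val * (L / N))
        - (lapH (L / N))^[κ] (gridSample (L / N) f) p) ^ 2 =
      N ^ 2 * ∑ q ∈ s, ‖a q‖ ^ 2 * (lapSymbol (waveNumber L q.1) (waveNumber L q.2) ^ κ
        - lapHSymbol (L / N) (waveNumber L q.1) (waveNumber L q.2) ^ κ) ^ 2 := by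
  set D : ℤ × ℤ → ℝ := fun q => lapSymbol (waveNumber L q.1) (waveNumber L q.2) ^ κ
    - lapHSymbol (L / N) (waveNumber L q.1) (waveNumber L q.2) ^ κ with hD
  set ψ : ℤ × ℤ → AddChar (ZMod N × ZMod N) ℂ :=
    fun q => gridChar ((q.1 : ZMod N), (q.2 : ZMod N))
  have hsample : ∀ p, (gridSample (L / N) f p : ℂ) = ∑ q ∈ s, a q * ψ q p := fun p => by
    simp only [gridSample, hf, cexp_waveNumber_grid_eq_gridChar hL, ψ]
  have herr : ∀ p : ZMod N × ZMod N,
      (((contLap^[κ] f) (p.1.val * (L / N)) (p.2.val * (L / N))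
        - (lapH (L / N))^[κ] (gridSample (L / N) f) p : ℝ) : ℂ) =
      ∑ q ∈ s, a q * (D q : ℂ) * ψ q p := fun p => by
    rw [Complex.ofReal_sub, ofReal_contLap_iterate_of_eq_sum_exp hf,
      ofReal_lapH_iterate_of_eq_sum_addChar hsample, ← Finset.sum_sub_distrib]
    refine Finset.sum_congr rfl fun q _ => ?_
    rw [cexp_waveNumber_grid_eq_gridChar hL, lapHEigenvalue_gridChar hL]
    simp only [hD, ψ, lapSymbol, mul_pow, Complex.I_sq]
    push_cast
    ring
  calc _ = ∑ p : ZMod N × ZMod N, ‖∑ q ∈ s, a q * (D q : ℂ) * ψ q p‖ ^ 2 := by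
        simp only [← herr, Complex.norm_real, Real.norm_eq_abs, sq_abs]
    _ = _ := by
        rw [sum_norm_sq_sum_addChar (ψ := ψ) (gridChar_injective.comp_injOn hs),
          Fintype.card_prod, ZMod.card, sq, Nat.cast_mul]
        simp only [hD, norm_mul, Complex.norm_real, Real.norm_eq_abs, mul_pow, sq_abs]

end GridChar

theorem discrete_laplacian_spectral_consistency_general (L : ℝ) (hL : 0 < L)
    (κ : ℕ) :
    ∃ C > (0 : ℝ), ∀ (N : ℕ) [NeZero N], Even N →
      ∀ (c : ℤ → ℤ → ℂ) (f : ℝ → ℝ → ℝ),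
        (∀ x y : ℝ, (f x y : ℂ) =
          ∑ k ∈ Finset.Icc (-(N : ℤ) / 2 + 1) ((N : ℤ) / 2),
            ∑ l ∈ Finset.Icc (-(N : ℤ) / 2 + 1) ((N : ℤ) / 2),
              c k l * Complex.exp (2 * (π : ℂ) * Complex.I / (L : ℂ)
                * ((k : ℂ) * (x : ℂ) + (l : ℂ) * (y : ℂ)))) →
        Real.sqrt ((L / N) ^ 2 * ∑ p : ZMod N × ZMod N,
            ((contLap^[κ] f) ((p.1.val : ℝ) * (L / N)) ((p.2.val : ℝ) * (L / N))
              - (lapH (L / N))^[κ]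
                  (fun q : ZMod N × ZMod N =>
                    f ((q.1.val : ℝ) * (L / N)) ((q.2.val : ℝ) * (L / N))) p) ^ 2)
          ≤ C * (L / N) ^ 2 *
            Real.sqrt (∑ k ∈ Finset.Icc (-(N : ℤ) / 2 + 1) ((N : ℤ) / 2),
              ∑ l ∈ Finset.Icc (-(N : ℤ) / 2 + 1) ((N : ℤ) / 2),
                (1 + (2 * π / L) ^ 2 * ((k : ℝ) ^ 2 + (l : ℝ) ^ 2)) ^ (2 + 2 * κ)
                  * ‖c k l‖ ^ 2) := by
  -- the argument gives `κ L`; the extra `L` keeps `C` positive when `κ = 0`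
  refine ⟨(κ + 1) * L, by positivity, fun N _ _ c f hf => ?_⟩
  set A := Finset.Icc (-(N : ℤ) / 2 + 1) ((N : ℤ) / 2)
  have hN : (N : ℝ) ≠ 0 := Nat.cast_ne_zero.2 (NeZero.ne N)
  have hA : Set.InjOn (Int.cast : ℤ → ZMod N) A := (injOn_intCast_Ioc N (-(N : ℤ) / 2)).mono
    fun k hk => by simp only [A, Finset.coe_Icc, Set.mem_Icc] at hk; constructor <;> omega
  have hf' : ∀ x y : ℝ, (f x y : ℂ) = ∑ q ∈ A ×ˢ A,
      c q.1 q.2 * cexp (waveNumber L q.1 * I * x + waveNumber L q.2 * I * y) := fun x y => by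
    rw [hf, Finset.sum_product]
    refine Finset.sum_congr rfl fun k _ => Finset.sum_congr rfl fun l _ => ?_
    simp only [waveNumber]
    push_cast
    ring_nf
  have herr := sum_sq_contLap_iterate_sub_lapH_iterate hL.ne'
    (by simpa only [Finset.coe_product] using hA.prodMap hA) _ hf' κ
  unfold gridSample at herr
  rw [Finset.sum_product] at herr
  have hE := sum_norm_sq_mul_symbol_error_sq_le (by positivity : L / N ≠ 0) L A c κ
  set S := ∑ k ∈ A, ∑ l ∈ A,
    (1 + (2 * π / L) ^ 2 * ((k : ℝ) ^ 2 + (l : ℝ) ^ 2)) ^ (2 + 2 * κ) * ‖c k l‖ ^ 2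
  rw [herr]
  calc _ ≤ √((κ * L * (L / N) ^ 2) ^ 2 * S) := Real.sqrt_le_sqrt <| by
        calc _ ≤ (L / N) ^ 2 * (N ^ 2 * ((κ * (L / N) ^ 2) ^ 2 * S)) := by gcongr
          _ = _ := by field_simp
    _ ≤ _ := by
        rw [Real.sqrt_mul (by positivity), Real.sqrt_sq (by positivity)]
        gcongr
        linarith

/-- Spatial consistency of the discrete Laplacian on trigonometric polynomials of degree
at most `N/2` (no aliasing error): for `L > 0` and `κ ∈ {1, 2, 3}` there is a constant
`C > 0` depending only on `L` and `κ` such that, for every even positive `N`, with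
`h = L/N` and grid points `xᵢ = i·h`, and every real-valued trigonometric polynomial
`f(x,y) = ∑_{k,l=−N/2+1}^{N/2} f̂_{k,l} e^{(2πi/L)(kx+ly)}`, the discrete `L²` norm of
`(Δ^κ f)(xᵢ, xⱼ) − (Δₕ^κ f^g)(i,j)` is at most
`C h² (∑_{k,l} (1 + (2π/L)²(k² + l²))^{2+2κ} |f̂_{k,l}|²)^{1/2}`. -/
theorem discrete_laplacian_spectral_consistency (L : ℝ) (hL : 0 < L)
    (κ : ℕ) (hκ : κ ∈ ({1, 2, 3} : Set ℕ)) :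
    ∃ C > (0 : ℝ), ∀ (N : ℕ) [NeZero N], Even N →
      ∀ (c : ℤ → ℤ → ℂ) (f : ℝ → ℝ → ℝ),
        (∀ x y : ℝ, (f x y : ℂ) =
          ∑ k ∈ Finset.Icc (-(N : ℤ) / 2 + 1) ((N : ℤ) / 2),
            ∑ l ∈ Finset.Icc (-(N : ℤ) / 2 + 1) ((N : ℤ) / 2),
              c k l * Complex.exp (2 * (π : ℂ) * Complex.I / (L : ℂ)
                * ((k : ℂ) * (x : ℂ) + (l : ℂ) * (y : ℂ)))) →
        Real.sqrt ((L / N) ^ 2 * ∑ p : ZMod N × ZMod N,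
            ((contLap^[κ] f) ((p.1.val : ℝ) * (L / N)) ((p.2.val : ℝ) * (L / N))
              - (lapH (L / N))^[κ]
                  (fun q : ZMod N × ZMod N =>
                    f ((q.1.val : ℝ) * (L / N)) ((q.2.val : ℝ) * (L / N))) p) ^ 2)
          ≤ C * (L / N) ^ 2 *
            Real.sqrt (∑ k ∈ Finset.Icc (-(N : ℤ) / 2 + 1) ((N : ℤ) / 2),
              ∑ l ∈ Finset.Icc (-(N : ℤ) / 2 + 1) ((N : ℤ) / 2),
                (1 + (2 * π / L) ^ 2 * ((k : ℝ) ^ 2 + (l : ℝ) ^ 2)) ^ (2 + 2 * κ)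
                  * ‖c k l‖ ^ 2) :=
  discrete_laplacian_spectral_consistency_general L hL κ
end
end
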